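/- arXiv:2203.14477 — 2 statements merged into one kernel-verified Lean document; each statement's English description precedes it below -/
import Mathlib

section
/- (Theorem 1) Let n ≥ 1, let A_1, …, A_n be nonempty finite action sets with individual action-value functions Q_i : A_i → ℝ, and let F be the self-weighting mixing function F(q) = (1/n) · Σ_{i=1}^n (w2_i · elu(w1_i·q_i + b1_i) + b2_i) · exp(k_i) + v with parameters w1_i ≥ 0, w2_i ≥ 0, b1_i, b2_i, k_i, v ∈ ℝ. Then the factorization satisfies the IGM condition: if a*_i maximizes Q_i over A_i for each i, then (a*_1, …, a*_n) maximizes the joint action-value u ↦ F(Q_1(u_1), …, Q_n(u_n)) over A_1 × ⋯ × A_n. -/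
/-- The ELU activation with parameter α = 1. -/
noncomputable def elu (x : ℝ) : ℝ := if 0 ≤ x then x else Real.exp x - 1

lemma elu_mono : Monotone elu := by
  intro x y hxy
  unfold elu
  split_ifs with hx hy hy
  · exact hxy
  · linarith
  · have : Real.exp x ≤ 1 := by
      have := Real.exp_le_one_iff.mpr (le_of_not_ge hx)
      exact this
    linarith
  · have := Real.exp_le_exp.mpr hxy
    linarith

/-- (Theorem 1) The self-weighting mixing network factorization satisfies the IGM
condition: individually maximizing actions jointly maximize the mixed action-value. -/
theorem stmt_9 (n : ℕ) (hn : 1 ≤ n) (A : Fin n → Type*)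
    [∀ i, Fintype (A i)] [∀ i, Nonempty (A i)]
    (Q : ∀ i, A i → ℝ)
    (w1 w2 b1 b2 k : Fin n → ℝ) (v : ℝ)
    (hw1 : ∀ i, 0 ≤ w1 i) (hw2 : ∀ i, 0 ≤ w2 i)
    (F : (Fin n → ℝ) → ℝ)
    (hF : ∀ q : Fin n → ℝ,
      F q = (1 / (n : ℝ)) *
        (∑ i, (w2 i * elu (w1 i * q i + b1 i) + b2 i) * Real.exp (k i)) + v)
    (a : ∀ i, A i) (ha : ∀ i, ∀ b : A i, Q i b ≤ Q i (a i)) :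
    ∀ u : ∀ i, A i, F (fun i => Q i (u i)) ≤ F (fun i => Q i (a i)) := by
  intro u
  rw [hF, hF]
  have hsum : (∑ i, (w2 i * elu (w1 i * Q i (u i) + b1 i) + b2 i) * Real.exp (k i))
      ≤ ∑ i, (w2 i * elu (w1 i * Q i (a i) + b1 i) + b2 i) * Real.exp (k i) := by
    apply Finset.sum_le_sum
    intro i _
    have h1 : w1 i * Q i (u i) + b1 i ≤ w1 i * Q i (a i) + b1 i := by
      have := mul_le_mul_of_nonneg_left (ha i (u i)) (hw1 i)
      linarith
    have h2 := elu_mono h1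
    have h3 := mul_le_mul_of_nonneg_left h2 (hw2 i)
    have := (Real.exp_pos (k i)).le
    nlinarith
  have hn' : (0:ℝ) ≤ 1 / (n : ℝ) := by positivity
  nlinarith
end

section
/- Let n ≥ 1, let A_1, …, A_n be nonempty finite action sets with individual action-value functions Q_i : A_i → ℝ, and let F : ℝ^n → ℝ be strictly increasing in each coordinate (if two vectors agree in all coordinates except one, where the first is strictly smaller, then F is strictly smaller at the first). Then a joint action a = (a_1, …, a_n) maximizes u ↦ F(Q_1(u_1), …, Q_n(u_n)) over A_1 × ⋯ × A_n if and only if a_i maximizes Q_i over A_i for every i; that is, the set of joint maximizers equals the product of the sets of individual maximizers. -/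
lemma mono_of_strict (n : ℕ) (F : (Fin n → ℝ) → ℝ)
    (hF : ∀ (i : Fin n) (q q' : Fin n → ℝ),
      (∀ j, j ≠ i → q j = q' j) → q i < q' i → F q < F q') :
    ∀ (s : Finset (Fin n)) (q q' : Fin n → ℝ),
      (∀ j, j ∉ s → q j = q' j) → (∀ j, q j ≤ q' j) → F q ≤ F q' := by
  intro s
  induction s using Finset.induction_on with
  | empty =>
    intro q q' h _
    have : q = q' := funext fun j => h j (Finset.notMem_empty j)
    simp [this]
  | @insert i s hi ih =>
    intro q q' hout hle
    set q'' := Function.update q i (q' i) with hq''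
    have h1 : F q ≤ F q'' := by
      rcases lt_or_eq_of_le (hle i) with h | h
      · exact le_of_lt (hF i q q'' (fun j hj => by simp [hq'', Function.update_of_ne hj]) (by simp [hq'', h]))
      · have : q'' = q := by
          funext j; by_cases hji : j = i <;> simp [hq'', hji, Function.update, ← h]
        simp [this]
    refine h1.trans (ih q'' q' ?_ ?_)
    · intro j hj
      by_cases hji : j = i
      · subst hji; simp [hq'']
      · rw [hq'', Function.update_of_ne hji]
        exact hout j (by simp [hji, hj])
    · intro j
      by_cases hji : j = i <;> simp [hq'', hji, Function.update_of_ne, hle j]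

/-- For a mixing function strictly increasing in each coordinate, the joint maximizers
are exactly the tuples of individual maximizers (IGM in its strong, argmax-equality form). -/
theorem stmt_11 (n : ℕ) (hn : 1 ≤ n) (A : Fin n → Type*)
    [∀ i, Fintype (A i)] [∀ i, Nonempty (A i)]
    (Q : ∀ i, A i → ℝ) (F : (Fin n → ℝ) → ℝ)
    (hF : ∀ (i : Fin n) (q q' : Fin n → ℝ),
      (∀ j, j ≠ i → q j = q' j) → q i < q' i → F q < F q') :
    ∀ a : ∀ i, A i,
      (∀ u : ∀ i, A i, F (fun i => Q i (u i)) ≤ F (fun i => Q i (a i))) ↔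
        (∀ i, ∀ b : A i, Q i b ≤ Q i (a i)) := by
  intro a
  constructor
  · intro hmax i b
    by_contra hlt
    push_neg at hlt
    set u : ∀ i, A i := Function.update a i b with hu
    have h := hF i (fun j => Q j (a j)) (fun j => Q j (u j))
      (fun j hj => by simp [hu, Function.update_of_ne hj])
      (by simp [hu, hlt])
    exact absurd (hmax u) (not_le.mpr h)
  · intro hind u
    exact mono_of_strict n F hF Finset.univ _ _ (fun j hj => absurd (Finset.mem_univ j) hj)
      (fun j => hind j (u j))
end
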